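/- Bell decomposition of the (3,5) quantum secret sharing code (access part of Proposition 8): let C5 be the cycle graph on vertices {1,…,5} and for α, β ∈ ℂ let |S_g⟩ := α|G_{(0,0,0,0,0)}⟩ + β|G_{(1,1,1,1,1)}⟩ ∈ H_5. With Bell states |B_00⟩=(|00⟩+|11⟩)/√2, |B_01⟩=(|00⟩−|11⟩)/√2, |B_10⟩=(|01⟩+|10⟩)/√2, |B_11⟩=(|01⟩−|10⟩)/√2 and |±⟩=(|0⟩±|1⟩)/√2, one has, up to the canonical reordering of tensor factors into qubits {1,3}, qubit 2, and qubits {4,5}: |S_g⟩ = (1/2)[ |B_00⟩_{13}(α|+⟩+β|−⟩)_2|B_01⟩_{45} + |B_01⟩_{13}(α|+⟩−β|−⟩)_2|B_10⟩_{45} + |B_10⟩_{13}(α|−⟩−β|+⟩)_2|B_00⟩_{45} + |B_11⟩_{13}(α|−⟩+β|+⟩)_2|B_11⟩_{45} ]. Hence a Bell measurement on qubits {1,3} localizes the quantum secret onto qubit 2 up to a known local correction. -/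

import Mathlib

noncomputable section

open scoped ComplexConjugate

/-- The Hilbert space of qubits indexed by `V`, as functions from bit strings to `ℂ`. -/
abbrev QState (V : Type) : Type := (V → Fin 2) → ℂ

/-- The diagonal operator with diagonal entries `d`. -/
def diagOp {V : Type} (d : (V → Fin 2) → ℂ) : QState V →ₗ[ℂ] QState V where
  toFun f := fun x => d x * f x
  map_add' f g := by funext x; simp [mul_add]
  map_smul' c f := by funext x; simp [smul_eq_mul]; ring

/-- The Pauli `Z` operator on qubit `i`. -/
def Zop {V : Type} (i : V) : QState V →ₗ[ℂ] QState V :=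
  diagOp fun x => (-1 : ℂ) ^ (x i : ℕ)

/-- The Pauli `X` operator on qubit `i` (bit flip). -/
def Xop {V : Type} [DecidableEq V] (i : V) : QState V →ₗ[ℂ] QState V where
  toFun f := fun x => f (Function.update x i (x i + 1))
  map_add' f g := rfl
  map_smul' c f := rfl

/-- The phase gate `S` on qubit `i`, sending `|x⟩` to `(-i)^(x i) |x⟩`. -/
def Sop {V : Type} (i : V) : QState V →ₗ[ℂ] QState V :=
  diagOp fun x => (-Complex.I) ^ (x i : ℕ)

/-- The Pauli `Y` operator on qubit `i`, `Y = i·X·Z`. -/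
def Yop {V : Type} [DecidableEq V] (i : V) : QState V →ₗ[ℂ] QState V :=
  Complex.I • (Xop i ∘ₗ Zop i)

/-- `qVal G x` is the number of edges of `G` both of whose endpoints carry bit 1 in `x`. -/
def qVal {V : Type} (G : SimpleGraph V) (x : V → Fin 2) : ℕ :=
  Nat.card {e : Sym2 V // e ∈ G.edgeSet ∧ ∀ v ∈ e, x v = 1}

/-- The graph state `|G⟩`, with amplitudes `2^{-n/2} (-1)^{q_G(x)}`. -/
def graphState {V : Type} [Fintype V] (G : SimpleGraph V) : QState V :=
  fun x => (((Real.sqrt 2)⁻¹ ^ Fintype.card V : ℝ) : ℂ) * (-1 : ℂ) ^ qVal G x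

/-- The labeled/encoded graph state `|𝒢_ℓ⟩ = (∏_i Z_i^{ℓ_i}) (∏_{j ∈ Vsq} S_j) |G⟩`,
with square-vertex set `Vsq`. -/
def encSq {V : Type} [Fintype V] (G : SimpleGraph V) (Vsq : Set V) (ℓ : V → Fin 2) : QState V :=
  fun x => (-1 : ℂ) ^ Nat.card {i : V // ℓ i = 1 ∧ x i = 1}
    * (-Complex.I) ^ Nat.card {j : V // j ∈ Vsq ∧ x j = 1}
    * graphState G x

/-- The encoded graph state `|G_ℓ⟩` (no square vertices). -/
def encG {V : Type} [Fintype V] (G : SimpleGraph V) (ℓ : V → Fin 2) : QState V :=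
  encSq G ∅ ℓ

open Classical in
/-- The stabilizer operator of vertex `i`: `X_i ∏_{j ∈ N_i} Z_j` for circular vertices,
`Y_i ∏_{j ∈ N_i} Z_j` for square vertices (`i ∈ Vsq`). -/
def Kop {V : Type} [DecidableEq V] (G : SimpleGraph V) (Vsq : Set V) (i : V) :
    QState V →ₗ[ℂ] QState V :=
  (if i ∈ Vsq then Yop i else Xop i) ∘ₗ
    diagOp fun x => (-1 : ℂ) ^ Nat.card {j : V // G.Adj i j ∧ x j = 1}

/-- Merge a bit string on `P` with a bit string on the complement of `P`. -/
def mergeBits {V : Type} [DecidableEq V] (P : Finset V) (a : {i // i ∈ P} → Fin 2)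
    (c : {i // i ∉ P} → Fin 2) : V → Fin 2 :=
  fun i => if h : i ∈ P then a ⟨i, h⟩ else c ⟨i, h⟩

/-- The reduced density matrix of the pure state `ψ` on the qubits in `P`:
`(a, b) ↦ ∑_c ⟨a⊔c|ψ⟩⟨ψ|b⊔c⟩`. -/
def red {V : Type} [Fintype V] [DecidableEq V] (P : Finset V) (ψ : QState V) :
    ({i // i ∈ P} → Fin 2) → ({i // i ∈ P} → Fin 2) → ℂ :=
  fun a b => ∑ c : {i // i ∉ P} → Fin 2, ψ (mergeBits P a c) * conj (ψ (mergeBits P b c))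

/-- The computational basis vector `|y⟩`. -/
def basisVec {V : Type} [Fintype V] [DecidableEq V] (y : V → Fin 2) : QState V :=
  fun x => if x = y then 1 else 0

/-- The matrix entry `⟨x|A|y⟩` of an operator. -/
def opEntry {V : Type} [Fintype V] [DecidableEq V] (A : QState V →ₗ[ℂ] QState V)
    (x y : V → Fin 2) : ℂ := A (basisVec y) x

/-- `A` acts trivially outside `P`: it equals `M ⊗ Id` for some operator `M` on the
qubits in `P`. -/
def trivialOutside {V : Type} [Fintype V] [DecidableEq V] (P : Finset V)
    (A : QState V →ₗ[ℂ] QState V) : Prop :=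
  ∃ M : ({i // i ∈ P} → Fin 2) → ({i // i ∈ P} → Fin 2) → ℂ,
    ∀ a b c c', opEntry A (mergeBits P a c) (mergeBits P b c') = if c = c' then M a b else 0

/-- The product `∏_{i ∈ T} K_i` of (commuting) operators, taken in sorted order. -/
def prodOps {V : Type} [LinearOrder V] (T : Finset V)
    (K : V → QState V →ₗ[ℂ] QState V) : QState V →ₗ[ℂ] QState V :=
  (T.sort (· ≤ ·)).foldr (fun i acc => K i ∘ₗ acc) LinearMap.id

/-- The cycle graph on `Fin n` (consecutive vertices mod `n` are adjacent). -/
def cycG (n : ℕ) [NeZero n] : SimpleGraph (Fin n) where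
  Adj a b := a ≠ b ∧ (b = a + 1 ∨ a = b + 1)
  symm := by refine ⟨?_⟩; intro a b h; exact ⟨h.1.symm, h.2.symm⟩
  loopless := by refine ⟨?_⟩; intro a h; exact h.1 rfl

/-- Components of the Bell states: `bell s t` is `B_{st}` with
`B_00 = (|00⟩+|11⟩)/√2`, `B_01 = (|00⟩−|11⟩)/√2`, `B_10 = (|01⟩+|10⟩)/√2`,
`B_11 = (|01⟩−|10⟩)/√2`. -/
def bell (s t z₁ z₂ : Fin 2) : ℂ :=
  (((Real.sqrt 2)⁻¹ : ℝ) : ℂ) * (-1 : ℂ) ^ ((t : ℕ) * (z₁ : ℕ)) * (if z₂ = z₁ + s then 1 else 0)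

/-- Components of `|+⟩ = (|0⟩+|1⟩)/√2`. -/
def plusC (_ : Fin 2) : ℂ := (((Real.sqrt 2)⁻¹ : ℝ) : ℂ)

/-- Components of `|−⟩ = (|0⟩−|1⟩)/√2`. -/
def minusC (z : Fin 2) : ℂ := (((Real.sqrt 2)⁻¹ : ℝ) : ℂ) * (-1 : ℂ) ^ (z : ℕ)

/-! The amplitude of `α|G_{00000}⟩ + β|G_{11111}⟩` at `x` is `2^{-5/2} (-1)^{q(x)} (α + (-1)^{|x|} β)`
with `q(x) = x₀x₁ + x₁x₂ + x₂x₃ + x₃x₄ + x₄x₀`. On the right-hand side the Bell factors on the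
coordinates `{0, 2}` and `{3, 4}` kill all but one of the four terms, the one selected by the
parities `x₀ + x₂` and `x₃ + x₄`, and its sign agrees with `(-1)^{q(x)}` on each of the 32 bit
strings. -/

instance (n : ℕ) [NeZero n] : DecidableRel (cycG n).Adj := fun a b =>
  inferInstanceAs (Decidable (a ≠ b ∧ (b = a + 1 ∨ a = b + 1)))

section EncodedGraphState

variable {V : Type} [Fintype V] (G : SimpleGraph V)

theorem card_eq_one_eq_sum (x : V → Fin 2) : Nat.card {i // x i = 1} = ∑ i, (x i : ℕ) := by
  classical
  rw [Nat.card_eq_fintype_card, Fintype.card_subtype, Finset.card_filter]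
  refine Finset.sum_congr rfl fun i _ => ?_
  generalize x i = b
  fin_cases b <;> rfl

theorem encG_apply (ℓ x : V → Fin 2) :
    encG G ℓ x = (-1) ^ Nat.card {i // ℓ i = 1 ∧ x i = 1} * graphState G x := by
  simp [encG, encSq]

theorem encG_const_zero : encG G (fun _ => 0) = graphState G := by
  ext x
  simp [encG_apply]

theorem encG_const_one (x : V → Fin 2) :
    encG G (fun _ => 1) x = (-1) ^ (∑ i, (x i : ℕ)) * graphState G x := by
  simp only [encG_apply, ← card_eq_one_eq_sum, true_and]

theorem smul_encG_zero_add_smul_encG_one_apply (α β : ℂ) (x : V → Fin 2) :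
    (α • encG G (fun _ => 0) + β • encG G fun _ => 1) x =
      (α + (-1) ^ (∑ i, (x i : ℕ)) * β) * graphState G x := by
  simp only [Pi.add_apply, Pi.smul_apply, smul_eq_mul, encG_const_zero, encG_const_one]
  ring

end EncodedGraphState

theorem qVal_cycG_five (x : Fin 5 → Fin 2) :
    qVal (cycG 5) x = (x 0 : ℕ) * x 1 + (x 1 : ℕ) * x 2 + (x 2 : ℕ) * x 3 + (x 3 : ℕ) * x 4
      + (x 4 : ℕ) * x 0 := by
  rw [qVal, Nat.card_eq_fintype_card]
  revert x
  decide

theorem graphState_cycG_five (x : Fin 5 → Fin 2) :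
    graphState (cycG 5) x = 1 / 2 * (((Real.sqrt 2)⁻¹ : ℝ) : ℂ) ^ 3 *
      (-1) ^ ((x 0 : ℕ) * x 1 + (x 1 : ℕ) * x 2 + (x 2 : ℕ) * x 3 + (x 3 : ℕ) * x 4
        + (x 4 : ℕ) * x 0) := by
  have h_sq : (Real.sqrt 2)⁻¹ ^ 2 = (1 / 2 : ℝ) := by
    rw [inv_pow, Real.sq_sqrt zero_le_two, one_div]
  have h_pow : (Real.sqrt 2)⁻¹ ^ 5 = 1 / 2 * (Real.sqrt 2)⁻¹ ^ 3 := by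
    rw [← h_sq]; ring
  rw [graphState, qVal_cycG_five, Fintype.card_fin, h_pow]
  push_cast
  ring

/-- Bell decomposition of the (3,5) QQ code: for the 5-cycle code state
`|S_g⟩ = α|G_{00000}⟩ + β|G_{11111}⟩`, stated pointwise on the computational basis
(qubits {1,3} ↦ coordinates (0,2), qubit 2 ↦ 1, qubits {4,5} ↦ (3,4)):
`|S_g⟩ = (1/2)[ B₀₀(α|+⟩+β|−⟩)B₀₁ + B₀₁(α|+⟩−β|−⟩)B₁₀ + B₁₀(α|−⟩−β|+⟩)B₀₀
             + B₁₁(α|−⟩+β|+⟩)B₁₁ ]`,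
so a Bell measurement on qubits {1,3} localizes the secret onto qubit 2 up to a known
local correction. -/
theorem c5_qq_bell_decomposition (α β : ℂ) (x : Fin 5 → Fin 2) :
    (α • encG (cycG 5) (fun _ => (0 : Fin 2)) + β • encG (cycG 5) fun _ => (1 : Fin 2)) x =
      (1 / 2 : ℂ) *
        (bell 0 0 (x 0) (x 2) * (α * plusC (x 1) + β * minusC (x 1)) * bell 0 1 (x 3) (x 4) +
         bell 0 1 (x 0) (x 2) * (α * plusC (x 1) - β * minusC (x 1)) * bell 1 0 (x 3) (x 4) +
         bell 1 0 (x 0) (x 2) * (α * minusC (x 1) - β * plusC (x 1)) * bell 0 0 (x 3) (x 4) +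
         bell 1 1 (x 0) (x 2) * (α * minusC (x 1) + β * plusC (x 1)) * bell 1 1 (x 3) (x 4)) := by
  rw [smul_encG_zero_add_smul_encG_one_apply, graphState_cycG_five, Fin.sum_univ_five]
  simp only [bell, plusC, minusC]
  generalize x 0 = a, x 1 = b, x 2 = c, x 3 = d, x 4 = e
  fin_cases a <;> fin_cases b <;> fin_cases c <;> fin_cases d <;> fin_cases e <;> simp <;> ring

end
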